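/- For every n ≥ 0 there exists an indecomposable representation M of Q with dimension vector (n+1, n, n, n) together with a short exact sequence of representations 0 → P₂ ⊕ P₃ ⊕ P₄ⁿ → P₁ⁿ⁺¹ → M → 0. -/

import Mathlib

variable (k : Type) [Field k]

/-- A finite-dimensional representation of the quiver `Q` with vertices `1,2,3,4`
and arrows `a : 1 → 2`, `b : 1 → 3`, `c : 2 → 4`, `d : 3 → 4`. -/
structure QRep where
  V1 : Type
  V2 : Type
  V3 : Type
  V4 : Type
  [acg1 : AddCommGroup V1]
  [acg2 : AddCommGroup V2]
  [acg3 : AddCommGroup V3]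
  [acg4 : AddCommGroup V4]
  [mod1 : Module k V1]
  [mod2 : Module k V2]
  [mod3 : Module k V3]
  [mod4 : Module k V4]
  [fin1 : FiniteDimensional k V1]
  [fin2 : FiniteDimensional k V2]
  [fin3 : FiniteDimensional k V3]
  [fin4 : FiniteDimensional k V4]
  ma : V1 →ₗ[k] V2
  mb : V1 →ₗ[k] V3
  mc : V2 →ₗ[k] V4
  md : V3 →ₗ[k] V4

attribute [instance] QRep.acg1 QRep.acg2 QRep.acg3 QRep.acg4
  QRep.mod1 QRep.mod2 QRep.mod3 QRep.mod4
  QRep.fin1 QRep.fin2 QRep.fin3 QRep.fin4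

variable {k}

/-- Morphisms of representations of `Q`. -/
@[ext]
structure QHom (M N : QRep k) where
  f1 : M.V1 →ₗ[k] N.V1
  f2 : M.V2 →ₗ[k] N.V2
  f3 : M.V3 →ₗ[k] N.V3
  f4 : M.V4 →ₗ[k] N.V4
  comm_a : f2 ∘ₗ M.ma = N.ma ∘ₗ f1
  comm_b : f3 ∘ₗ M.mb = N.mb ∘ₗ f1
  comm_c : f4 ∘ₗ M.mc = N.mc ∘ₗ f2
  comm_d : f4 ∘ₗ M.md = N.md ∘ₗ f3

/-- Two representations are isomorphic iff there is a morphism all of whose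
components are bijective. -/
def QIso (M N : QRep k) : Prop :=
  ∃ f : QHom M N, Function.Bijective f.f1 ∧ Function.Bijective f.f2 ∧
    Function.Bijective f.f3 ∧ Function.Bijective f.f4

/-- The zero representation(s). -/
def QRep.IsZeroRep (M : QRep k) : Prop :=
  Subsingleton M.V1 ∧ Subsingleton M.V2 ∧ Subsingleton M.V3 ∧ Subsingleton M.V4

/-- Vertexwise direct sum of representations. -/
def QRep.dsum (M N : QRep k) : QRep k where
  V1 := M.V1 × N.V1
  V2 := M.V2 × N.V2
  V3 := M.V3 × N.V3
  V4 := M.V4 × N.V4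
  ma := M.ma.prodMap N.ma
  mb := M.mb.prodMap N.mb
  mc := M.mc.prodMap N.mc
  md := M.md.prodMap N.md

/-- Direct sum of `n` copies of a representation. -/
def QRep.dpow (M : QRep k) (n : ℕ) : QRep k where
  V1 := Fin n → M.V1
  V2 := Fin n → M.V2
  V3 := Fin n → M.V3
  V4 := Fin n → M.V4
  ma := M.ma.compLeft (Fin n)
  mb := M.mb.compLeft (Fin n)
  mc := M.mc.compLeft (Fin n)
  md := M.md.compLeft (Fin n)

/-- A representation is indecomposable if it is nonzero and not isomorphic to a
direct sum of two nonzero representations. -/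
def QRep.Indecomposable (M : QRep k) : Prop :=
  ¬ M.IsZeroRep ∧ ∀ A B : QRep k, QIso M (A.dsum B) → A.IsZeroRep ∨ B.IsZeroRep

/-- `0 → A → B → C → 0` is short exact (vertexwise). -/
def QShortExact {A B C : QRep k} (f : QHom A B) (g : QHom B C) : Prop :=
  (Function.Injective f.f1 ∧ Function.Injective f.f2 ∧
    Function.Injective f.f3 ∧ Function.Injective f.f4) ∧
  (Function.Surjective g.f1 ∧ Function.Surjective g.f2 ∧
    Function.Surjective g.f3 ∧ Function.Surjective g.f4) ∧
  (LinearMap.range f.f1 = LinearMap.ker g.f1 ∧ LinearMap.range f.f2 = LinearMap.ker g.f2 ∧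
    LinearMap.range f.f3 = LinearMap.ker g.f3 ∧ LinearMap.range f.f4 = LinearMap.ker g.f4)

variable (k)

/-- The `n×n` Jordan block with eigenvalue `lam`, as a linear endomorphism of `kⁿ`. -/
def jordan (n : ℕ) (lam : k) : (Fin n → k) →ₗ[k] (Fin n → k) :=
  Matrix.mulVecLin (Matrix.of fun i j : Fin n =>
    if i = j then lam else if (i : ℕ) + 1 = (j : ℕ) then 1 else 0)

/-- The representation `M_n(λ) = (kⁿ,kⁿ,kⁿ,kⁿ; id,id,id,J_n(λ))`. -/
def Mlam (n : ℕ) (lam : k) : QRep k where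
  V1 := Fin n → k
  V2 := Fin n → k
  V3 := Fin n → k
  V4 := Fin n → k
  ma := LinearMap.id
  mb := LinearMap.id
  mc := LinearMap.id
  md := jordan k n lam

/-- The indecomposable projective `P₁ = (k,k,k,k²)`. -/
def P1 : QRep k where
  V1 := k
  V2 := k
  V3 := k
  V4 := k × k
  ma := LinearMap.id
  mb := LinearMap.id
  mc := LinearMap.inl k k k
  md := LinearMap.inr k k k

/-- The indecomposable projective `P₂ = (0,k,0,k)`. -/
def P2 : QRep k where
  V1 := Fin 0 → k
  V2 := k
  V3 := Fin 0 → k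
  V4 := k
  ma := 0
  mb := 0
  mc := LinearMap.id
  md := 0

/-- The indecomposable projective `P₃ = (0,0,k,k)`. -/
def P3 : QRep k where
  V1 := Fin 0 → k
  V2 := Fin 0 → k
  V3 := k
  V4 := k
  ma := 0
  mb := 0
  mc := 0
  md := LinearMap.id

/-- The indecomposable projective `P₄ = (0,0,0,k)`. -/
def P4 : QRep k where
  V1 := Fin 0 → k
  V2 := Fin 0 → k
  V3 := Fin 0 → k
  V4 := k
  ma := 0
  mb := 0
  mc := 0
  md := 0

/-! Let `M` be the representation `(kⁿ⁺¹, kⁿ, kⁿ, kⁿ)` whose arrows `a`, `b` forget the last,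
respectively the first, coordinate and whose arrows `c`, `d` are identities. An endomorphism of
`M` is a pair `(h, g)` intertwining both forgetful maps; comparing matrix entries, the matrix of
`h` is constant along diagonals and its first and last columns vanish off the diagonal, so it
is scalar. Hence `End M = k`, and an isomorphism `M ≅ A ⊕ B` would transport the projection of
`A ⊕ B` onto `A` to a scalar `c`: if `c = 0` then `A = 0`, otherwise `B = 0`.

`M` is the quotient of `P₁ⁿ⁺¹` by the subrepresentation generated by `c(e_n)` (a copy of `P₂`),
`d(e_0)` (a copy of `P₃`) and `c(e_j) - d(e_{j+1})` for `j < n` (`n` copies of `P₄`), where `e_j`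
generates the `j`-th copy of `P₁`. Exactness then follows from injectivity, surjectivity and a
dimension count at each vertex.
-/

open Function

variable {k}

section Conjugation

variable {V₁ V₂ W₁ W₂ : Type*} [AddCommGroup V₁] [Module k V₁] [AddCommGroup V₂] [Module k V₂]
  [AddCommGroup W₁] [Module k W₁] [AddCommGroup W₂] [Module k W₂]

theorem LinearMap.symm_ofBijective_comp_eq {f₁ : V₁ →ₗ[k] W₁} {f₂ : V₂ →ₗ[k] W₂}
    {a : V₁ →ₗ[k] V₂} {b : W₁ →ₗ[k] W₂} (h₁ : Bijective f₁) (h₂ : Bijective f₂)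
    (h : f₂ ∘ₗ a = b ∘ₗ f₁) :
    (LinearEquiv.ofBijective f₂ h₂).symm.toLinearMap ∘ₗ b =
      a ∘ₗ (LinearEquiv.ofBijective f₁ h₁).symm.toLinearMap := by
  ext w
  obtain ⟨v, rfl⟩ := h₁.2 w
  apply h₂.1
  simpa using (LinearMap.congr_fun h v).symm

theorem LinearMap.eq_smul_id_of_conj_eq {f : V₁ →ₗ[k] W₁} (hf : Bijective f) {φ : W₁ →ₗ[k] W₁}
    {c : k} (h : (LinearEquiv.ofBijective f hf).symm.toLinearMap ∘ₗ φ ∘ₗ f = c • LinearMap.id) :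
    φ = c • LinearMap.id := by
  ext w
  obtain ⟨v, rfl⟩ := hf.2 w
  have := congrArg f (LinearMap.congr_fun h v)
  simpa using this

end Conjugation

namespace QHom

variable {M N P : QRep k}

def comp (g : QHom N P) (f : QHom M N) : QHom M P where
  f1 := g.f1 ∘ₗ f.f1
  f2 := g.f2 ∘ₗ f.f2
  f3 := g.f3 ∘ₗ f.f3
  f4 := g.f4 ∘ₗ f.f4
  comm_a := by
    rw [LinearMap.comp_assoc, f.comm_a, ← LinearMap.comp_assoc, g.comm_a, LinearMap.comp_assoc]
  comm_b := by
    rw [LinearMap.comp_assoc, f.comm_b, ← LinearMap.comp_assoc, g.comm_b, LinearMap.comp_assoc]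
  comm_c := by
    rw [LinearMap.comp_assoc, f.comm_c, ← LinearMap.comp_assoc, g.comm_c, LinearMap.comp_assoc]
  comm_d := by
    rw [LinearMap.comp_assoc, f.comm_d, ← LinearMap.comp_assoc, g.comm_d, LinearMap.comp_assoc]

noncomputable def invOfBijective (f : QHom M N) (h1 : Bijective f.f1) (h2 : Bijective f.f2)
    (h3 : Bijective f.f3) (h4 : Bijective f.f4) : QHom N M where
  f1 := (LinearEquiv.ofBijective f.f1 h1).symm
  f2 := (LinearEquiv.ofBijective f.f2 h2).symm
  f3 := (LinearEquiv.ofBijective f.f3 h3).symm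
  f4 := (LinearEquiv.ofBijective f.f4 h4).symm
  comm_a := LinearMap.symm_ofBijective_comp_eq h1 h2 f.comm_a
  comm_b := LinearMap.symm_ofBijective_comp_eq h1 h3 f.comm_b
  comm_c := LinearMap.symm_ofBijective_comp_eq h2 h4 f.comm_c
  comm_d := LinearMap.symm_ofBijective_comp_eq h3 h4 f.comm_d

end QHom

namespace QRep

def IsSchurian (M : QRep k) : Prop :=
  ∀ φ : QHom M M, ∃ c : k, φ.f1 = c • LinearMap.id ∧ φ.f2 = c • LinearMap.id ∧
    φ.f3 = c • LinearMap.id ∧ φ.f4 = c • LinearMap.id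

theorem IsSchurian.of_qIso {M N : QRep k} (hM : M.IsSchurian) (hMN : QIso M N) :
    N.IsSchurian := by
  obtain ⟨f, h1, h2, h3, h4⟩ := hMN
  intro φ
  obtain ⟨c, hc1, hc2, hc3, hc4⟩ := hM ((f.invOfBijective h1 h2 h3 h4).comp (φ.comp f))
  exact ⟨c, LinearMap.eq_smul_id_of_conj_eq h1 hc1, LinearMap.eq_smul_id_of_conj_eq h2 hc2,
    LinearMap.eq_smul_id_of_conj_eq h3 hc3, LinearMap.eq_smul_id_of_conj_eq h4 hc4⟩

def dsumProjFst (A B : QRep k) : QHom (A.dsum B) (A.dsum B) where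
  f1 := LinearMap.prodMap LinearMap.id 0
  f2 := LinearMap.prodMap LinearMap.id 0
  f3 := LinearMap.prodMap LinearMap.id 0
  f4 := LinearMap.prodMap LinearMap.id 0
  comm_a := LinearMap.ext fun _ => Prod.ext rfl (map_zero B.ma).symm
  comm_b := LinearMap.ext fun _ => Prod.ext rfl (map_zero B.mb).symm
  comm_c := LinearMap.ext fun _ => Prod.ext rfl (map_zero B.mc).symm
  comm_d := LinearMap.ext fun _ => Prod.ext rfl (map_zero B.md).symm

theorem subsingleton_of_prodMap_id_zero_eq_smul {A B : Type*} [AddCommGroup A] [Module k A]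
    [AddCommGroup B] [Module k B] {c : k}
    (h : LinearMap.prodMap (LinearMap.id : A →ₗ[k] A) (0 : B →ₗ[k] B) = c • LinearMap.id) :
    (c = 0 → Subsingleton A) ∧ (c ≠ 0 → Subsingleton B) := by
  constructor
  · rintro rfl
    exact subsingleton_of_forall_eq 0 fun a => by simpa using LinearMap.congr_fun h (a, 0)
  · intro hc
    exact subsingleton_of_forall_eq 0 fun b => by
      simpa [hc, eq_comm] using LinearMap.congr_fun h (0, b)

theorem isZeroRep_or_isZeroRep_of_isSchurian_dsum {A B : QRep k} (h : (A.dsum B).IsSchurian) :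
    A.IsZeroRep ∨ B.IsZeroRep := by
  obtain ⟨c, h1, h2, h3, h4⟩ := h (A.dsumProjFst B)
  have h1 := subsingleton_of_prodMap_id_zero_eq_smul (A := A.V1) (B := B.V1) h1
  have h2 := subsingleton_of_prodMap_id_zero_eq_smul (A := A.V2) (B := B.V2) h2
  have h3 := subsingleton_of_prodMap_id_zero_eq_smul (A := A.V3) (B := B.V3) h3
  have h4 := subsingleton_of_prodMap_id_zero_eq_smul (A := A.V4) (B := B.V4) h4
  by_cases hc : c = 0
  · exact Or.inl ⟨h1.1 hc, h2.1 hc, h3.1 hc, h4.1 hc⟩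
  · exact Or.inr ⟨h1.2 hc, h2.2 hc, h3.2 hc, h4.2 hc⟩

theorem Indecomposable.of_isSchurian {M : QRep k} (h0 : ¬M.IsZeroRep) (hM : M.IsSchurian) :
    M.Indecomposable :=
  ⟨h0, fun _ _ hiso => isZeroRep_or_isZeroRep_of_isSchurian_dsum (hM.of_qIso hiso)⟩

end QRep

theorem LinearMap.range_eq_ker_of_finrank_eq {U V W : Type*} [AddCommGroup U] [Module k U]
    [AddCommGroup V] [Module k V] [AddCommGroup W] [Module k W] [FiniteDimensional k V]
    {f : U →ₗ[k] V} {g : V →ₗ[k] W} (hf : Injective f) (hg : Surjective g) (hgf : g ∘ₗ f = 0)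
    (hdim : Module.finrank k V = Module.finrank k U + Module.finrank k W) :
    LinearMap.range f = LinearMap.ker g := by
  refine Submodule.eq_of_le_of_finrank_eq (LinearMap.range_le_ker_iff.mpr hgf) ?_
  have := g.finrank_range_add_finrank_ker
  rw [LinearMap.range_eq_top.mpr hg, finrank_top] at this
  rw [LinearMap.finrank_range_of_inj hf]
  omega

theorem QShortExact.of_finrank_eq {A B C : QRep k} {f : QHom A B} {g : QHom B C}
    (hf : Injective f.f1 ∧ Injective f.f2 ∧ Injective f.f3 ∧ Injective f.f4)
    (hg : Surjective g.f1 ∧ Surjective g.f2 ∧ Surjective g.f3 ∧ Surjective g.f4)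
    (hgf : g.f1 ∘ₗ f.f1 = 0 ∧ g.f2 ∘ₗ f.f2 = 0 ∧ g.f3 ∘ₗ f.f3 = 0 ∧ g.f4 ∘ₗ f.f4 = 0)
    (hdim : Module.finrank k B.V1 = Module.finrank k A.V1 + Module.finrank k C.V1 ∧
      Module.finrank k B.V2 = Module.finrank k A.V2 + Module.finrank k C.V2 ∧
      Module.finrank k B.V3 = Module.finrank k A.V3 + Module.finrank k C.V3 ∧
      Module.finrank k B.V4 = Module.finrank k A.V4 + Module.finrank k C.V4) :
    QShortExact f g :=
  ⟨hf, hg, LinearMap.range_eq_ker_of_finrank_eq hf.1 hg.1 hgf.1 hdim.1,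
    LinearMap.range_eq_ker_of_finrank_eq hf.2.1 hg.2.1 hgf.2.1 hdim.2.1,
    LinearMap.range_eq_ker_of_finrank_eq hf.2.2.1 hg.2.2.1 hgf.2.2.1 hdim.2.2.1,
    LinearMap.range_eq_ker_of_finrank_eq hf.2.2.2 hg.2.2.2 hgf.2.2.2 hdim.2.2.2⟩

theorem Matrix.eq_smul_one_of_shift_invariant {n : ℕ} (H : Matrix (Fin (n + 1)) (Fin (n + 1)) k)
    (hshift : ∀ i j : Fin n, H i.succ j.succ = H i.castSucc j.castSucc)
    (hlast : ∀ i : Fin n, H i.castSucc (Fin.last n) = 0)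
    (hzero : ∀ i : Fin n, H i.succ 0 = 0) :
    H = H 0 0 • 1 := by
  have lower : ∀ j i : Fin (n + 1), j < i → H i j = 0 := by
    intro j
    induction j using Fin.induction with
    | zero =>
      intro i hi
      obtain ⟨i, rfl⟩ := Fin.exists_succ_eq.mpr hi.ne'
      exact hzero i
    | succ j ih =>
      intro i hi
      obtain ⟨i, rfl⟩ := Fin.exists_succ_eq.mpr ((Fin.succ_pos j).trans hi).ne'
      rw [hshift]
      exact ih _ (Fin.castSucc_lt_castSucc_iff.mpr (Fin.succ_lt_succ_iff.mp hi))
  have upper : ∀ j i : Fin (n + 1), i < j → H i j = 0 := by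
    intro j
    induction j using Fin.reverseInduction with
    | last =>
      intro i hi
      obtain ⟨i, rfl⟩ := Fin.exists_castSucc_eq.mpr hi.ne
      exact hlast i
    | cast j ih =>
      intro i hi
      obtain ⟨i, rfl⟩ := Fin.exists_castSucc_eq.mpr (hi.trans (Fin.castSucc_lt_last j)).ne
      rw [← hshift]
      exact ih _ (Fin.succ_lt_succ_iff.mpr (Fin.castSucc_lt_castSucc_iff.mp hi))
  have diag : ∀ i : Fin (n + 1), H i i = H 0 0 := by
    intro i
    induction i using Fin.induction with
    | zero => rfl
    | succ i ih => rw [hshift, ih]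
  ext i j
  rcases lt_trichotomy i j with hij | rfl | hij
  · simp [upper j i hij, hij.ne]
  · simp [diag]
  · simp [lower j i hij, hij.ne']

section ShiftRep

variable (k) in
def finInit (n : ℕ) : (Fin (n + 1) → k) →ₗ[k] (Fin n → k) := LinearMap.funLeft k k Fin.castSucc

variable (k) in
def finTail (n : ℕ) : (Fin (n + 1) → k) →ₗ[k] (Fin n → k) := LinearMap.funLeft k k Fin.succ

variable {n : ℕ}

@[simp]
theorem finInit_apply (v : Fin (n + 1) → k) (i : Fin n) : finInit k n v i = v i.castSucc := rfl

@[simp]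
theorem finTail_apply (v : Fin (n + 1) → k) (i : Fin n) : finTail k n v i = v i.succ := rfl

theorem finInit_surjective : Surjective (finInit k n) :=
  LinearMap.funLeft_surjective_of_injective _ _ _ (Fin.castSucc_injective n)

theorem finTail_surjective : Surjective (finTail k n) :=
  LinearMap.funLeft_surjective_of_injective _ _ _ (Fin.succ_injective n)

@[simp]
theorem finInit_single_castSucc (j : Fin n) (x : k) :
    finInit k n (Pi.single j.castSucc x) = Pi.single j x := by
  ext i
  simp [Pi.single_apply]

@[simp]
theorem finInit_single_last (x : k) : finInit k n (Pi.single (Fin.last n) x) = 0 := by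
  ext i
  simp [(Fin.castSucc_lt_last i).ne]

@[simp]
theorem finTail_single_succ (j : Fin n) (x : k) :
    finTail k n (Pi.single j.succ x) = Pi.single j x := by
  ext i
  simp [Pi.single_apply]

@[simp]
theorem finTail_single_zero (x : k) : finTail k n (Pi.single 0 x) = 0 := by
  ext i
  simp [Fin.succ_ne_zero]

theorem exists_eq_smul_id_of_comp_finInit_of_comp_finTail
    {h : (Fin (n + 1) → k) →ₗ[k] (Fin (n + 1) → k)} {g : (Fin n → k) →ₗ[k] (Fin n → k)}
    (hinit : g ∘ₗ finInit k n = finInit k n ∘ₗ h) (htail : g ∘ₗ finTail k n = finTail k n ∘ₗ h) :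
    ∃ c : k, h = c • LinearMap.id ∧ g = c • LinearMap.id := by
  set H := LinearMap.toMatrix' h
  have entry_castSucc (i : Fin n) (j : Fin (n + 1)) :
      H i.castSucc j = g (finInit k n (Pi.single j 1)) i :=
    (congrFun (LinearMap.congr_fun hinit (Pi.single j 1)) i).symm
  have entry_succ (i : Fin n) (j : Fin (n + 1)) :
      H i.succ j = g (finTail k n (Pi.single j 1)) i :=
    (congrFun (LinearMap.congr_fun htail (Pi.single j 1)) i).symm
  have hH : H = H 0 0 • 1 := by
    refine H.eq_smul_one_of_shift_invariant (fun i j => ?_) (fun i => ?_) (fun i => ?_) <;>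
      simp [entry_castSucc, entry_succ]
  have hh : h = H 0 0 • LinearMap.id :=
    LinearMap.toMatrix'.injective (by rw [map_smul, LinearMap.toMatrix'_id, ← hH])
  refine ⟨H 0 0, hh, (LinearMap.cancel_right finInit_surjective).mp ?_⟩
  rw [hinit, hh]
  rfl

variable (k) in
def shiftRep (n : ℕ) : QRep k where
  V1 := Fin (n + 1) → k
  V2 := Fin n → k
  V3 := Fin n → k
  V4 := Fin n → k
  ma := finInit k n
  mb := finTail k n
  mc := LinearMap.id
  md := LinearMap.id

theorem shiftRep_isSchurian : (shiftRep k n).IsSchurian := by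
  intro φ
  have hc : φ.f4 = φ.f2 := φ.comm_c
  have hd : φ.f4 = φ.f3 := φ.comm_d
  obtain ⟨c, h1, h2⟩ :=
    exists_eq_smul_id_of_comp_finInit_of_comp_finTail φ.comm_a (hc ▸ hd ▸ φ.comm_b)
  exact ⟨c, h1, h2, hd ▸ hc ▸ h2, hc ▸ h2⟩

theorem shiftRep_not_isZeroRep : ¬(shiftRep k n).IsZeroRep :=
  fun h => not_subsingleton (Fin (n + 1) → k) h.1

theorem shiftRep_indecomposable : (shiftRep k n).Indecomposable :=
  .of_isSchurian shiftRep_not_isZeroRep shiftRep_isSchurian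

end ShiftRep

section Resolution

variable {n : ℕ}

variable (k) in
def coverMap4 (n : ℕ) : (Fin (n + 1) → k × k) →ₗ[k] (Fin n → k) :=
  finInit k n ∘ₗ (LinearMap.fst k k k).compLeft _ + finTail k n ∘ₗ (LinearMap.snd k k k).compLeft _

@[simp]
theorem coverMap4_apply (w : Fin (n + 1) → k × k) (i : Fin n) :
    coverMap4 k n w i = (w i.castSucc).1 + (w i.succ).2 := rfl

theorem coverMap4_comp_inl : coverMap4 k n ∘ₗ (LinearMap.inl k k k).compLeft _ = finInit k n := by
  ext; simp

theorem coverMap4_comp_inr : coverMap4 k n ∘ₗ (LinearMap.inr k k k).compLeft _ = finTail k n := by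
  ext; simp

variable (k) in
def syzygyMap4 (n : ℕ) : k × k × (Fin n → k) →ₗ[k] (Fin (n + 1) → k × k) where
  toFun v i :=
    ((Fin.snoc v.2.2 v.1 : Fin (n + 1) → k) i, (Fin.cons v.2.1 (-v.2.2) : Fin (n + 1) → k) i)
  map_add' v w := by
    ext i
    · induction i using Fin.lastCases <;> simp
    · induction i using Fin.cases <;> simp [add_comm]
  map_smul' c v := by
    ext i
    · induction i using Fin.lastCases <;> simp
    · induction i using Fin.cases <;> simp

@[simp]
theorem syzygyMap4_apply (v : k × k × (Fin n → k)) (i : Fin (n + 1)) :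
    syzygyMap4 k n v i =
      ((Fin.snoc v.2.2 v.1 : Fin (n + 1) → k) i, (Fin.cons v.2.1 (-v.2.2) : Fin (n + 1) → k) i) :=
  rfl

theorem syzygyMap4_inl (x : k) :
    syzygyMap4 k n (x, 0, 0) = fun i => ((Pi.single (Fin.last n) x : Fin (n + 1) → k) i, 0) := by
  ext i
  · induction i using Fin.lastCases <;> simp [syzygyMap4, (Fin.castSucc_lt_last _).ne]
  · induction i using Fin.cases <;> simp [syzygyMap4]

theorem syzygyMap4_inr (y : k) :
    syzygyMap4 k n (0, y, 0) = fun i => (0, (Pi.single 0 y : Fin (n + 1) → k) i) := by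
  ext i
  · induction i using Fin.lastCases <;> simp [syzygyMap4]
  · induction i using Fin.cases <;> simp [syzygyMap4, Fin.succ_ne_zero]

theorem syzygyMap4_injective : Injective (syzygyMap4 k n) := by
  rw [← LinearMap.ker_eq_bot, LinearMap.ker_eq_bot']
  rintro ⟨x, y, z⟩ h
  have hx := congrArg Prod.fst (congrFun h (Fin.last n))
  have hy := congrArg Prod.snd (congrFun h 0)
  have hz (j : Fin n) := congrArg Prod.fst (congrFun h j.castSucc)
  simp only [syzygyMap4_apply, Fin.snoc_last, Fin.cons_zero, Fin.snoc_castSucc, Pi.zero_apply,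
    Prod.fst_zero, Prod.snd_zero] at hx hy hz
  simp only [hx, hy, show z = 0 from funext hz, Prod.mk_zero_zero]

theorem coverMap4_comp_syzygyMap4 : coverMap4 k n ∘ₗ syzygyMap4 k n = 0 :=
  LinearMap.ext fun _ => funext fun _ => by simp

theorem coverMap4_surjective : Surjective (coverMap4 k n) := by
  intro u
  obtain ⟨v, rfl⟩ := finInit_surjective u
  exact ⟨_, LinearMap.congr_fun coverMap4_comp_inl v⟩

-- `P₂`, `P₃`, `P₄` are not reducible, so instance search cannot see that these spaces are built
-- from `Fin 0 → k`.
instance : Subsingleton ((P2 k).dsum ((P3 k).dsum ((P4 k).dpow n))).V1 :=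
  inferInstanceAs (Subsingleton ((Fin 0 → k) × (Fin 0 → k) × (Fin n → Fin 0 → k)))

instance : Subsingleton ((P3 k).dsum ((P4 k).dpow n)).V2 :=
  inferInstanceAs (Subsingleton ((Fin 0 → k) × (Fin n → Fin 0 → k)))

instance : Subsingleton (P2 k).V3 := inferInstanceAs (Subsingleton (Fin 0 → k))

instance : Subsingleton ((P4 k).dpow n).V3 := inferInstanceAs (Subsingleton (Fin n → Fin 0 → k))

variable (k) in
def shiftRepCover (n : ℕ) : QHom ((P1 k).dpow (n + 1)) (shiftRep k n) where
  f1 := LinearMap.id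
  f2 := finInit k n
  f3 := finTail k n
  f4 := coverMap4 k n
  comm_a := rfl
  comm_b := rfl
  comm_c := coverMap4_comp_inl
  comm_d := coverMap4_comp_inr

variable (k) in
def syzygyInclusion (n : ℕ) :
    QHom ((P2 k).dsum ((P3 k).dsum ((P4 k).dpow n))) ((P1 k).dpow (n + 1)) where
  f1 := 0
  f2 := LinearMap.single k (fun _ => k) (Fin.last n) ∘ₗ
    LinearMap.fst k k ((P3 k).dsum ((P4 k).dpow n)).V2
  f3 := LinearMap.single k (fun _ => k) 0 ∘ₗ LinearMap.fst k k ((P4 k).dpow n).V3 ∘ₗ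
    LinearMap.snd k (P2 k).V3 ((P3 k).dsum ((P4 k).dpow n)).V3
  f4 := syzygyMap4 k n
  comm_a := Subsingleton.elim _ _
  comm_b := Subsingleton.elim _ _
  comm_c := LinearMap.ext fun v => syzygyMap4_inl (k := k) v.1
  comm_d := LinearMap.ext fun v => syzygyMap4_inr (k := k) v.2.1

theorem shiftRep_shortExact : QShortExact (syzygyInclusion k n) (shiftRepCover k n) := by
  refine QShortExact.of_finrank_eq
    ⟨injective_of_subsingleton _, (Pi.single_injective (Fin.last n)).comp Prod.fst_injective,
      (Pi.single_injective 0).comp (Prod.fst_injective.comp Prod.snd_injective),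
      syzygyMap4_injective⟩
    ⟨surjective_id, finInit_surjective, finTail_surjective, coverMap4_surjective⟩
    ⟨LinearMap.comp_zero _, LinearMap.ext fun v => finInit_single_last (k := k) v.1,
      LinearMap.ext fun v => finTail_single_zero (k := k) v.2.1, coverMap4_comp_syzygyMap4⟩
    ⟨?_, ?_, ?_, ?_⟩
  · show Module.finrank k (Fin (n + 1) → k) =
      Module.finrank k ((Fin 0 → k) × (Fin 0 → k) × (Fin n → Fin 0 → k)) +
        Module.finrank k (Fin (n + 1) → k)
    simp [Module.finrank_zero_of_subsingleton]
  · show Module.finrank k (Fin (n + 1) → k) =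
      Module.finrank k (k × (Fin 0 → k) × (Fin n → Fin 0 → k)) + Module.finrank k (Fin n → k)
    simp [Module.finrank_zero_of_subsingleton, add_comm]
  · show Module.finrank k (Fin (n + 1) → k) =
      Module.finrank k ((Fin 0 → k) × k × (Fin n → Fin 0 → k)) + Module.finrank k (Fin n → k)
    simp [Module.finrank_zero_of_subsingleton, add_comm]
  · show Module.finrank k (Fin (n + 1) → k × k) =
      Module.finrank k (k × k × (Fin n → k)) + Module.finrank k (Fin n → k)
    simp [Module.finrank_pi_fintype]
    ring

end Resolution

/-- there is an indecomposable representation `M` of `Q` with the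
given dimension vector together with a short exact sequence as indicated. -/
theorem stmt8 (k : Type) [Field k] (n : ℕ) :
    ∃ M : QRep k, M.Indecomposable ∧
      Module.finrank k M.V1 = n+1 ∧ Module.finrank k M.V2 = n ∧
      Module.finrank k M.V3 = n ∧ Module.finrank k M.V4 = n ∧
      ∃ (f : QHom ((P2 k).dsum ((P3 k).dsum ((P4 k).dpow n))) ((P1 k).dpow (n+1))) (g : QHom ((P1 k).dpow (n+1)) M), QShortExact f g :=
  ⟨shiftRep k n, shiftRep_indecomposable, Module.finrank_fin_fun k, Module.finrank_fin_fun k,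
    Module.finrank_fin_fun k, Module.finrank_fin_fun k, syzygyInclusion k n, shiftRepCover k n,
    shiftRep_shortExact⟩
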